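/- Let n = 2p with p an odd prime and let f be a monomial rotation symmetric Boolean function in n variables whose orbit has exactly n monomials (full-cycle). Then f is not bent. -/

import Mathlib

/-!
Rotation by two positions generates a group of prime order `p` acting on `𝔽₂^(2p)`; it fixes
the MRS function `f` and every linear form `c • (x₀ + ⋯ + x₂ₚ₋₁)`. Hence each Walsh value
`W_f(c, …, c)` is congruent mod `p` to the part of its sum over the four fixed points, the
2-periodic vectors. There `f` vanishes at `00…0` (every monomial contains a variable) and at
`11…1` (there are `2p` monomials), and takes one value `e` at `0101…` and `1010…`, which are
rotations of each other; both have odd weight `p`. For `c = e + 1` the four terms are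
`1 - 1 - 1 + 1 = 0`, so `p ∣ W_f(c, …, c)`, which is impossible for `W_f = ±2^p` with `p` odd.
-/

open Finset

theorem Equiv.Perm.card_filter_modEq_card_filter_fixed {α : Type*} [Fintype α] [DecidableEq α]
    {p k : ℕ} [Fact p.Prime] {σ : Equiv.Perm α} (hσ : σ ^ p ^ k = 1) (P : α → Prop)
    [DecidablePred P] (hP : ∀ x, P (σ x) ↔ P x) :
    #{x | P x} ≡ #{x | σ x = x ∧ P x} [MOD p] := by
  have key := Equiv.Perm.card_compl_support_modEq (p := p) (n := k) (σ := σ.subtypePerm hP)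
    (by rw [Equiv.Perm.subtypePerm_pow]; ext; simp [hσ])
  rw [Fintype.card_subtype] at key
  convert key.symm using 1
  rw [← Finset.card_map (Function.Embedding.subtype P)]
  congr 1
  ext x
  simp [Subtype.ext_iff]

theorem Equiv.Perm.sum_modEq_sum_filter_fixed {α : Type*} [Fintype α] [DecidableEq α]
    {p k : ℕ} [Fact p.Prime] {σ : Equiv.Perm α} (hσ : σ ^ p ^ k = 1) (g : α → ℤ)
    (hg : ∀ x, g (σ x) = g x) :
    ∑ x, g x ≡ ∑ x with σ x = x, g x [ZMOD p] := by
  have fiber (s : Finset α) (c : ℤ) : ∑ x ∈ s with g x = c, g x = #{x ∈ s | g x = c} * c := by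
    rw [sum_congr rfl fun x hx => (mem_filter.1 hx).2, sum_const, nsmul_eq_mul]
  have hmaps : ∀ s : Finset α, ∀ x ∈ s, g x ∈ univ.image g :=
    fun _ x _ => mem_image_of_mem g (mem_univ x)
  rw [← sum_fiberwise_of_maps_to (hmaps _), ← sum_fiberwise_of_maps_to (hmaps _)]
  refine Int.ModEq.sum fun c _ => ?_
  rw [fiber, fiber, filter_filter]
  refine Int.ModEq.mul_right c ?_
  exact_mod_cast card_filter_modEq_card_filter_fixed hσ (g · = c) (by simp [hg])

theorem Fin.val_nsmul {n : ℕ} [NeZero n] (k : ℕ) (c : Fin n) :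
    ((k • c : Fin n) : ℕ) = k * c % n := by
  induction k with
  | zero => simp
  | succ k ih => rw [succ_nsmul, Fin.val_add, ih, Nat.mod_add_mod, Nat.succ_mul]

section CyclicShift

variable {n : ℕ} [NeZero n] {R : Type*}

def cyclicShift (c : Fin n) : Equiv.Perm (Fin n → R) where
  toFun x i := x (i + c)
  invFun x i := x (i - c)
  left_inv x := by ext; simp
  right_inv x := by ext; simp

@[simp]
theorem cyclicShift_apply (c : Fin n) (x : Fin n → R) (i : Fin n) :
    cyclicShift c x i = x (i + c) := rfl

theorem cyclicShift_pow (c : Fin n) (k : ℕ) :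
    (cyclicShift c : Equiv.Perm (Fin n → R)) ^ k = cyclicShift (k • c) := by
  induction k with
  | zero => ext; simp
  | succ k ih => ext x i; simp [pow_succ, ih, succ_nsmul, add_assoc]

end CyclicShift

section Alternating

variable {m : ℕ} {R : Type*}

theorem cyclicShift_two_pow_half [NeZero m] :
    (cyclicShift (2 : Fin (2 * m)) : Equiv.Perm (Fin (2 * m) → R)) ^ m = 1 := by
  have : m • (2 : Fin (2 * m)) = 0 := by
    ext
    rw [Fin.val_nsmul, Fin.coe_ofNat_eq_mod, Nat.mul_mod_mod, mul_comm, Nat.mod_self]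
    rfl
  rw [cyclicShift_pow, this]
  ext; simp

theorem even_val_add_iff (i c : Fin (2 * m)) :
    Even ((i + c : Fin (2 * m)) : ℕ) ↔ (Even (i : ℕ) ↔ Even (c : ℕ)) := by
  rw [Fin.val_add, Nat.even_iff, Nat.mod_mod_of_dvd _ (dvd_mul_right 2 m), ← Nat.even_iff,
    Nat.even_add]

theorem even_val_two [NeZero m] : Even ((2 : Fin (2 * m)) : ℕ) := by
  rw [Fin.coe_ofNat_eq_mod, Nat.even_iff, Nat.mod_mod_of_dvd _ (dvd_mul_right 2 m)]

theorem val_one_two_mul [NeZero m] : ((1 : Fin (2 * m)) : ℕ) = 1 := by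
  rw [Fin.val_one', Nat.mod_eq_of_lt]
  have := NeZero.pos m
  omega

def alternating (a b : R) : Fin (2 * m) → R := fun i => if Even (i : ℕ) then a else b

theorem alternating_self (a : R) : (alternating a a : Fin (2 * m) → R) = fun _ => a := by
  ext; simp [alternating]

theorem cyclicShift_two_alternating [NeZero m] (a b : R) :
    cyclicShift 2 (alternating a b : Fin (2 * m) → R) = alternating a b := by
  ext i
  simp only [cyclicShift_apply, alternating, even_val_add_iff, even_val_two, iff_true]

theorem cyclicShift_one_alternating [NeZero m] (a b : R) :
    cyclicShift 1 (alternating a b : Fin (2 * m) → R) = alternating b a := by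
  ext i
  simp only [cyclicShift_apply, alternating, even_val_add_iff, val_one_two_mul]
  by_cases h : Even (i : ℕ) <;> simp [h]

theorem alternating_injective [NeZero m] {a b a' b' : R}
    (h : (alternating a b : Fin (2 * m) → R) = alternating a' b') : a = a' ∧ b = b' := by
  have h0 := congrFun h 0
  have h1 := congrFun h 1
  simp only [alternating, val_one_two_mul] at h0 h1
  simpa using And.intro h0 h1

theorem alternating_eq_of_cyclicShift_two_eq_self [NeZero m] {x : Fin (2 * m) → R}
    (hx : cyclicShift 2 x = x) : alternating (x 0) (x 1) = x := by
  ext ⟨i, hi⟩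
  induction i using Nat.strong_induction_on with
  | _ i ih =>
    match i with
    | 0 => rfl
    | 1 =>
      have h1 : (⟨1, hi⟩ : Fin (2 * m)) = 1 := Fin.ext val_one_two_mul.symm
      simp [alternating, h1]
    | i + 2 =>
      have hshift : (⟨i + 2, hi⟩ : Fin (2 * m)) = ⟨i, by omega⟩ + 2 := by
        ext
        rw [Fin.val_add, Fin.coe_ofNat_eq_mod, Nat.mod_eq_of_lt (a := 2) (by omega),
          Nat.mod_eq_of_lt hi]
      calc alternating (x 0) (x 1) ⟨i + 2, hi⟩ = alternating (x 0) (x 1) ⟨i, by omega⟩ := by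
            simp [alternating, Nat.even_add]
        _ = x ⟨i, by omega⟩ := ih i (by omega) _
        _ = x ⟨i + 2, hi⟩ := by rw [hshift, ← congrFun hx, cyclicShift_apply]

theorem cyclicShift_two_eq_self_iff [NeZero m] (x : Fin (2 * m) → R) :
    cyclicShift 2 x = x ↔ ∃ a b, alternating a b = x :=
  ⟨fun hx => ⟨x 0, x 1, alternating_eq_of_cyclicShift_two_eq_self hx⟩,
    fun ⟨a, b, hab⟩ => hab ▸ cyclicShift_two_alternating a b⟩

theorem sum_filter_cyclicShift_two_eq_self [NeZero m] {M : Type*} [AddCommMonoid M]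
    [Fintype R] [DecidableEq R] (g : (Fin (2 * m) → R) → M) :
    ∑ x with cyclicShift 2 x = x, g x = ∑ a, ∑ b, g (alternating a b) := by
  have : ({x | cyclicShift 2 x = x} : Finset (Fin (2 * m) → R)) =
      univ.image fun ab : R × R => alternating ab.1 ab.2 := by
    ext x; simp [cyclicShift_two_eq_self_iff]
  rw [this, sum_image fun ab _ ab' _ h => Prod.ext_iff.2 (alternating_injective h),
    Fintype.sum_prod_type]

theorem sum_range_alternating {M : Type*} [AddCommMonoid M] (a b : M) (k : ℕ) :
    ∑ i ∈ range (2 * k), (if Even i then a else b) = k • (a + b) := by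
  induction k with
  | zero => simp
  | succ k ih =>
    rw [Nat.mul_succ, sum_range_succ, sum_range_succ, ih, succ_nsmul]
    simp [add_assoc]

theorem sum_alternating {M : Type*} [AddCommMonoid M] (a b : M) :
    ∑ i, (alternating a b : Fin (2 * m) → M) i = m • (a + b) :=
  (Fin.sum_univ_eq_sum_range (fun i => if Even i then a else b) _).trans
    (sum_range_alternating a b m)

end Alternating

section MRS

variable {n : ℕ} {R : Type*} [CommSemiring R] (S : Finset (Fin n))

/-- The orbit of the monomial `∏ s ∈ S, x s` under cyclic shifts of the variables; `mrs S`
is the monomial rotation symmetric function it generates. -/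
def mrsOrbit : Finset (Finset (Fin n)) := univ.image fun j => S.image (· + j)

def mrs (x : Fin n → R) : R := ∑ T ∈ mrsOrbit S, ∏ t ∈ T, x t

theorem image_add_mem_mrsOrbit {T : Finset (Fin n)} (hT : T ∈ mrsOrbit S) (c : Fin n) :
    T.image (· + c) ∈ mrsOrbit S := by
  obtain ⟨j, -, rfl⟩ := mem_image.1 hT
  exact mem_image.2 ⟨j + c, mem_univ _, by simp only [image_image, Function.comp_def, add_assoc]⟩

theorem mrs_cyclicShift [NeZero n] (c : Fin n) (x : Fin n → R) :
    mrs S (cyclicShift c x) = mrs S x := by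
  refine sum_nbij' (fun T => T.image (· + c)) (fun T => T.image (· + -c))
    (fun T hT => image_add_mem_mrsOrbit S hT c) (fun T hT => image_add_mem_mrsOrbit S hT (-c))
    (fun T _ => by simp only [image_image, Function.comp_def, add_neg_cancel_right, image_id'])
    (fun T _ => by simp only [image_image, Function.comp_def, neg_add_cancel_right, image_id'])
    fun T _ => ?_
  rw [prod_image fun a _ b _ h => add_right_cancel h]
  rfl

theorem mrs_zero (hS : S.Nonempty) : mrs S (fun _ => (0 : R)) = 0 := by
  refine sum_eq_zero fun T hT => ?_
  obtain ⟨j, -, rfl⟩ := mem_image.1 hT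
  exact prod_eq_zero (mem_image_of_mem _ hS.choose_spec) rfl

theorem mrs_one : mrs S (fun _ => (1 : R)) = #(mrsOrbit S) := by
  simp [mrs]

end MRS

theorem ZMod.sum_univ_two {M : Type*} [AddCommMonoid M] (f : ZMod 2 → M) :
    ∑ a, f a = f 0 + f 1 :=
  Fin.sum_univ_two f

def walsh {ι : Type*} [Fintype ι] [DecidableEq ι] (f : (ι → ZMod 2) → ZMod 2)
    (w : ι → ZMod 2) : ℤ :=
  ∑ x, (-1 : ℤ) ^ (f x + ∑ i, w i * x i).val

theorem walsh_const_modEq {p : ℕ} [Fact p.Prime] (hp : Odd p)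
    (f : (Fin (2 * p) → ZMod 2) → ZMod 2) (hf : ∀ x, f (cyclicShift 2 x) = f x) (c : ZMod 2) :
    walsh f (fun _ => c) ≡
      ∑ a, ∑ b, (-1 : ℤ) ^ (f (alternating a b) + c * (a + b)).val [ZMOD p] := by
  have : NeZero p := ⟨(Fact.out : p.Prime).ne_zero⟩
  have hg (x : Fin (2 * p) → ZMod 2) :
      (-1 : ℤ) ^ (f (cyclicShift 2 x) + ∑ i, c * cyclicShift 2 x i).val =
        (-1 : ℤ) ^ (f x + ∑ i, c * x i).val := by
    rw [hf, Fintype.sum_equiv (Equiv.addRight 2) (fun i => c * cyclicShift 2 x i)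
      (fun i => c * x i) fun _ => rfl]
  refine (Equiv.Perm.sum_modEq_sum_filter_fixed (k := 1)
    (by rw [pow_one]; exact cyclicShift_two_pow_half) _ hg).trans ?_
  simp only [sum_filter_cyclicShift_two_eq_self, ← mul_sum, sum_alternating, nsmul_eq_mul,
    hp.natCast_zmod_two, one_mul]
  rfl

theorem sum_neg_one_pow_twisted_eq_zero (g : ZMod 2 → ZMod 2 → ZMod 2) (h00 : g 0 0 = 0)
    (h11 : g 1 1 = 0) (h01 : g 0 1 = g 1 0) :
    ∑ a, ∑ b, (-1 : ℤ) ^ (g a b + (g 1 0 + 1) * (a + b)).val = 0 := by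
  simp only [ZMod.sum_univ_two, h00, h11, h01]
  generalize g 1 0 = e
  revert e
  decide

theorem Nat.Prime.eq_two_of_dvd_two_pow {p : ℕ} (hp : p.Prime) {W : ℤ} (hdvd : (p : ℤ) ∣ W)
    (hW : W = 2 ^ p ∨ W = -2 ^ p) : p = 2 := by
  have : p ∣ 2 ^ p := by
    rcases hW with rfl | rfl <;> simpa [Int.natCast_dvd] using hdvd
  exact (Nat.prime_dvd_prime_iff_eq hp Nat.prime_two).1 (hp.dvd_of_dvd_pow this)

/-- For `n = 2p`, `p` an odd prime, a full-cycle MRS Boolean function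
(sum of the exactly `n` distinct cyclic shifts of a monomial containing `x₀`)
is not bent. -/
theorem stmt16 (p : ℕ) (hp : p.Prime) (hp2 : 2 < p) (S : Finset (Fin (2*p)))
    (hS0 : (⟨0, by omega⟩ : Fin (2*p)) ∈ S)
    (hfull : (Finset.univ.image (fun j : Fin (2*p) => S.image (· + j))).card = 2*p) :
    ¬ (∀ w : Fin (2*p) → ZMod 2,
      (∑ x : Fin (2*p) → ZMod 2,
        (-1 : ℤ) ^ (((∑ T ∈ Finset.univ.image (fun j : Fin (2*p) => S.image (· + j)),
            ∏ t ∈ T, x t) + ∑ i, w i * x i).val)) = 2 ^ p ∨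
      (∑ x : Fin (2*p) → ZMod 2,
        (-1 : ℤ) ^ (((∑ T ∈ Finset.univ.image (fun j : Fin (2*p) => S.image (· + j)),
            ∏ t ∈ T, x t) + ∑ i, w i * x i).val)) = -(2 ^ p)) := by
  intro hbent
  have : Fact p.Prime := ⟨hp⟩
  have : NeZero p := ⟨hp.ne_zero⟩
  have h00 : mrs S (alternating (0 : ZMod 2) 0) = 0 := by
    rw [alternating_self, mrs_zero S ⟨_, hS0⟩]
  have h11 : mrs S (alternating (1 : ZMod 2) 1) = 0 := by
    rw [alternating_self, mrs_one, mrsOrbit, hfull]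
    exact (ZMod.natCast_eq_zero_iff_even).2 (even_two_mul p)
  have h01 : mrs S (alternating (0 : ZMod 2) 1) = mrs S (alternating (1 : ZMod 2) 0) := by
    rw [← cyclicShift_one_alternating, mrs_cyclicShift]
  have hfix := sum_neg_one_pow_twisted_eq_zero (fun a b => mrs S (alternating a b)) h00 h11 h01
  have hdvd := walsh_const_modEq (hp.odd_of_ne_two hp2.ne') (mrs S) (mrs_cyclicShift S 2)
    (mrs S (alternating 1 0) + 1)
  rw [hfix] at hdvd
  exact hp2.ne' (hp.eq_two_of_dvd_two_pow (Int.modEq_zero_iff_dvd.1 hdvd) (hbent _))
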